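/- Let n ≥ 5 be odd, and let G be a connected bipartite constraint graph with order ≺ and β : V → {1,2}, properly 2-coloured with colours black and white, such that every pair u ≺ v satisfies δ(u,v) ≥ β(v) − 1. If every black vertex u satisfies γ'(u) ≤ (n−3)/2, then every white vertex v satisfies γ'(v) ≤ (n−1)/2. -/
import Mathlib


namespace CountingCSP

/-! ## The basic framework

An instance `Ψ` of `{1,2}`-CSP is modelled by a number `m` of variables, the variable set
being `Fin m` with its natural linear order `<` (the order of quantification `≺`), a function
`β : Fin m → ℕ` taking values in `{1,2}` (variable `v` is quantified by `∃^{≥ β v}`), and a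
simple graph `G` on `Fin m` (the constraint graph).  A target graph is a type `B` together
with an adjacency relation `E : B → B → Prop` (loops allowed in general). -/

/-- Adjacency of the finite path `P_n` on the vertices `{1,…,n}`, modelled as `Fin n`. -/
def pathAdj (n : ℕ) (i j : Fin n) : Prop :=
  (i : ℕ) + 1 = j ∨ (j : ℕ) + 1 = i

/-- Adjacency of the infinite path `P_∞` on `ℤ`: `i` and `j` adjacent iff `|i - j| = 1`. -/
def intPathAdj (i j : ℤ) : Prop := |i - j| = 1

/-- `SatFrom β G E i f` : processing the variables of the instance in `≺`-increasing order
starting from variable `i`, where the earlier variables have been assigned according to `f`,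
the instance can be satisfied.  At each variable `v` one asks for a set `S` of `β v` distinct
elements of the target such that for every `b ∈ S` the rest of the instance can be satisfied
with `v ↦ b`; when all variables are assigned, the assignment must be a homomorphism. -/
def SatFrom {m : ℕ} {B : Type*} (β : Fin m → ℕ) (G : SimpleGraph (Fin m))
    (E : B → B → Prop) (i : ℕ) (f : Fin m → B) : Prop :=
  if h : i < m then
    ∃ S : Finset B, S.card = β ⟨i, h⟩ ∧
      ∀ b ∈ S, SatFrom β G E (i + 1) (Function.update f ⟨i, h⟩ b)
  else ∀ u v : Fin m, G.Adj u v → E (f u) (f v)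
termination_by m - i
decreasing_by omega

/-- `Sat β G E` : the instance with quantifiers `β` and constraint graph `G` is satisfied by
the target graph with adjacency `E`  (i.e. `H ⊨ Ψ`).  The initial assignment is irrelevant
since every variable is assigned before it is used. -/
def Sat {m : ℕ} {B : Type*} (β : Fin m → ℕ) (G : SimpleGraph (Fin m))
    (E : B → B → Prop) : Prop :=
  ∀ f : Fin m → B, SatFrom β G E 0 f

/-- A graph is bipartite iff it has a proper 2-colouring. -/
def Bipartite {V : Type*} (G : SimpleGraph V) : Prop :=
  ∃ c : V → Bool, ∀ u v, G.Adj u v → c u ≠ c v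

/-! ## Walks, looping walks, and the distance function δ -/

/-- `λ(Q) = |Q| − 2·∑_{interior vertices x of Q} (β x − 1)`, where `|Q|` is the length
(number of edges) of the walk `Q = x₁,…,x_r`, and the interior vertices are `x₂,…,x_{r−1}`. -/
def lamWalk {m : ℕ} (β : Fin m → ℕ) (Q : List (Fin m)) : ℤ :=
  ((Q.length : ℤ) - 1) - 2 * (((Q.drop 1).dropLast).map (fun x => (β x : ℤ) - 1)).sum

/-- Looping walks of `G` (with respect to the quantification order `<` on `Fin m`):
a walk `x₁,…,x_r` with `x₁ ≠ x_r` such that if `r ≥ 3` then both endpoints strictly precede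
every interior vertex and the walk splits at some interior position into two looping walks. -/
inductive IsLoopingWalk {m : ℕ} (G : SimpleGraph (Fin m)) : List (Fin m) → Prop
  | base {x y : Fin m} : G.Adj x y → IsLoopingWalk G [x, y]
  | comb {x y z : Fin m} {Q₁ Q₂ : List (Fin m)} :
      IsLoopingWalk G (x :: (Q₁ ++ [y])) →
      IsLoopingWalk G (y :: (Q₂ ++ [z])) →
      x ≠ z →
      (∀ w ∈ Q₁ ++ y :: Q₂, x < w ∧ z < w) →
      IsLoopingWalk G (x :: (Q₁ ++ y :: Q₂ ++ [z]))

/-- `Q` is a looping walk between `u` and `v` (in either direction). -/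
def LoopingWalkBetween {m : ℕ} (G : SimpleGraph (Fin m)) (u v : Fin m)
    (Q : List (Fin m)) : Prop :=
  IsLoopingWalk G Q ∧
    ((Q.head? = some u ∧ Q.getLast? = some v) ∨ (Q.head? = some v ∧ Q.getLast? = some u))

/-- `IsDelta G β u v d` : `d = δ(u,v)`, i.e. `d` is the minimum of `λ(Q)` over all looping
walks `Q` of `G` between `u` and `v`.  (`δ(u,v) < ∞` corresponds to `∃ d, IsDelta G β u v d`.) -/
def IsDelta {m : ℕ} (G : SimpleGraph (Fin m)) (β : Fin m → ℕ) (u v : Fin m) (d : ℤ) : Prop :=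
  (∃ Q, LoopingWalkBetween G u v Q ∧ lamWalk β Q = d) ∧
    ∀ Q, LoopingWalkBetween G u v Q → d ≤ lamWalk β Q

/-! ## The functions γ and γ′ -/

/-- `IsGammaVal G β g v t` : `t = max(0, max_{u ≺ v, δ(u,v) < ∞} (g u − δ(u,v) + β v − 1))`. -/
def IsGammaVal {m : ℕ} (G : SimpleGraph (Fin m)) (β : Fin m → ℕ) (g : Fin m → ℤ)
    (v : Fin m) (t : ℤ) : Prop :=
  0 ≤ t ∧
  (∀ u, u < v → ∀ d, IsDelta G β u v d → g u - d + (β v : ℤ) - 1 ≤ t) ∧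
  (t = 0 ∨ ∃ u, u < v ∧ ∃ d, IsDelta G β u v d ∧ t = g u - d + (β v : ℤ) - 1)

/-- `g` is the function `γ`: `γ(v) = 0` for the `≺`-least vertex, and otherwise
`γ(v) = β(v) − 1 + max(0, max_{u ≺ v, δ(u,v) < ∞} (γ(u) − δ(u,v) + β(v) − 1))`. -/
def IsGamma {m : ℕ} (G : SimpleGraph (Fin m)) (β : Fin m → ℕ) (g : Fin m → ℤ) : Prop :=
  ∀ v : Fin m,
    if (v : ℕ) = 0 then g v = 0
    else ∃ t, IsGammaVal G β g v t ∧ g v = (β v : ℤ) - 1 + t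

/-- `g` is the function `γ′`:
`γ′(v) = β(v) − 1 + max(0, max_{u ≺ v, δ(u,v) < ∞} (γ′(u) − δ(u,v) + β(v) − 1))`
(so `γ′(v) = β(v) − 1` for the `≺`-least vertex). -/
def IsGamma' {m : ℕ} (G : SimpleGraph (Fin m)) (β : Fin m → ℕ) (g : Fin m → ℤ) : Prop :=
  ∀ v : Fin m, ∃ t, IsGammaVal G β g v t ∧ g v = (β v : ℤ) - 1 + t

/-! ## The closure sets (F, R⁺, R⁻) for the {2}-CSP(K₄) algorithm -/

mutual
/-- Membership in the closure set `F` of pairs (initialised as the edge set of `G`). -/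
inductive InF {m : ℕ} (G : SimpleGraph (Fin m)) : Finset (Fin m) → Prop
  | edge {x y : Fin m} : G.Adj x y → InF G {x, y}
  | x3a {x y w z : Fin m} : [x, y, w, z].Pairwise (· ≠ ·) →
      x < z → y < z → w < z → ¬(x < w ∧ y < w) →
      InF G {w, z} → InRp G {x, y, z} → InF G {x, w}
  | x3b {x y w z : Fin m} : [x, y, w, z].Pairwise (· ≠ ·) →
      x < z → y < z → w < z → ¬(x < w ∧ y < w) →
      InF G {w, z} → InRp G {x, y, z} → InF G {y, w}
  | x4 {x y w z : Fin m} : [x, y, w, z].Pairwise (· ≠ ·) →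
      x < y → w < y → y < z →
      InRp G {x, y, z} → InRm G {w, y, z} → InF G {x, w}
  | x7a {x y q w z : Fin m} : [x, y, q, w, z].Pairwise (· ≠ ·) →
      x < q → y < q → w < q → q < z → ¬(x < w ∧ y < w) →
      InRp G {x, y, z} → InRm G {w, q, z} → InF G {x, w}
  | x7a' {x y q w z : Fin m} : [x, y, q, w, z].Pairwise (· ≠ ·) →
      x < q → y < q → w < q → q < z → ¬(x < w ∧ y < w) →
      InRm G {x, y, z} → InRp G {w, q, z} → InF G {x, w}
  | x7b {x y q w z : Fin m} : [x, y, q, w, z].Pairwise (· ≠ ·) →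
      x < q → y < q → w < q → q < z → ¬(x < w ∧ y < w) →
      InRp G {x, y, z} → InRm G {w, q, z} → InF G {y, w}
  | x7b' {x y q w z : Fin m} : [x, y, q, w, z].Pairwise (· ≠ ·) →
      x < q → y < q → w < q → q < z → ¬(x < w ∧ y < w) →
      InRm G {x, y, z} → InRp G {w, q, z} → InF G {y, w}

/-- Membership in the closure set `R⁺` of triples. -/
inductive InRp {m : ℕ} (G : SimpleGraph (Fin m)) : Finset (Fin m) → Prop
  | x2 {x y w z : Fin m} : [x, y, w, z].Pairwise (· ≠ ·) →
      x < z → y < z → w < z →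
      InF G {w, z} → InRm G {x, y, z} → InRp G {x, y, w}
  | x4 {x y w z : Fin m} : [x, y, w, z].Pairwise (· ≠ ·) →
      x < y → w < y → y < z →
      InRp G {x, y, z} → InRm G {w, y, z} → InRp G {x, y, w}
  | x5p {x y w z : Fin m} : [x, y, w, z].Pairwise (· ≠ ·) →
      x < z → y < z → w < z →
      InRp G {x, y, z} → InRp G {w, y, z} → InRp G {x, y, w}
  | x5m {x y w z : Fin m} : [x, y, w, z].Pairwise (· ≠ ·) →
      x < z → y < z → w < z →
      InRm G {x, y, z} → InRm G {w, y, z} → InRp G {x, y, w}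
  | x6ap {x y q w z : Fin m} : [x, y, q, w, z].Pairwise (· ≠ ·) →
      x < q → y < q → w < q → q < z →
      InRp G {x, y, z} → InRp G {w, q, z} → InRp G {x, y, w}
  | x6am {x y q w z : Fin m} : [x, y, q, w, z].Pairwise (· ≠ ·) →
      x < q → y < q → w < q → q < z →
      InRm G {x, y, z} → InRm G {w, q, z} → InRp G {x, y, w}
  | x6bp {x y q w z : Fin m} : [x, y, q, w, z].Pairwise (· ≠ ·) →
      x < q → y < q → w < q → q < z →
      InRp G {x, y, z} → InRp G {w, q, z} → InRp G {x, y, q}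
  | x6bm {x y q w z : Fin m} : [x, y, q, w, z].Pairwise (· ≠ ·) →
      x < q → y < q → w < q → q < z →
      InRm G {x, y, z} → InRm G {w, q, z} → InRp G {x, y, q}

/-- Membership in the closure set `R⁻` of triples. -/
inductive InRm {m : ℕ} (G : SimpleGraph (Fin m)) : Finset (Fin m) → Prop
  | x1 {x y z : Fin m} : [x, y, z].Pairwise (· ≠ ·) →
      x < z → y < z →
      InF G {x, z} → InF G {y, z} → InRm G {x, y, z}
  | x3 {x y w z : Fin m} : [x, y, w, z].Pairwise (· ≠ ·) →
      x < z → y < z → w < z → x < w → y < w →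
      InF G {w, z} → InRp G {x, y, z} → InRm G {x, y, w}
  | x7a {x y q w z : Fin m} : [x, y, q, w, z].Pairwise (· ≠ ·) →
      x < q → y < q → w < q → q < z →
      InRp G {x, y, z} → InRm G {w, q, z} → InRm G {x, y, q}
  | x7a' {x y q w z : Fin m} : [x, y, q, w, z].Pairwise (· ≠ ·) →
      x < q → y < q → w < q → q < z →
      InRm G {x, y, z} → InRp G {w, q, z} → InRm G {x, y, q}
  | x7b {x y q w z : Fin m} : [x, y, q, w, z].Pairwise (· ≠ ·) →
      x < q → y < q → w < q → q < z → x < w → y < w →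
      InRp G {x, y, z} → InRm G {w, q, z} → InRm G {x, y, w}
  | x7b' {x y q w z : Fin m} : [x, y, q, w, z].Pairwise (· ≠ ·) →
      x < q → y < q → w < q → q < z → x < w → y < w →
      InRm G {x, y, z} → InRp G {w, q, z} → InRm G {x, y, w}
end


lemma looping_parity {m : ℕ} {G : SimpleGraph (Fin m)} (β : Fin m → ℕ)
    {c : Fin m → Bool} (hc : ∀ u v, G.Adj u v → c u ≠ c v) :
    ∀ {Q}, IsLoopingWalk G Q → ∀ x z, Q.head? = some x → Q.getLast? = some z →
      (Even (lamWalk β Q) ↔ c x = c z) := by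
  intro Q hQ
  induction hQ with
  | @base a b hadj =>
      intro x z hx hz
      have hx' : a = x := by simpa using hx
      have hz' : b = z := by simpa using hz
      subst hx'; subst hz'
      have hne := hc _ _ hadj
      have h1 : lamWalk β [a, b] = 1 := by simp [lamWalk]
      rw [h1]
      have h2 : ¬ Even (1:ℤ) := by decide
      simp [h2]
      exact hne
  | @comb a y b Q₁ Q₂ h1 h2 hab hmem ih1 ih2 =>
      intro x z hx hz
      have hx' : a = x := by simpa using hx
      have hz' : b = z := by
        rw [show a :: (Q₁ ++ y :: Q₂ ++ [b]) = (a :: (Q₁ ++ y :: Q₂)) ++ [b] from by simp,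
          List.getLast?_concat] at hz
        exact Option.some.inj hz
      subst hx'; subst hz'
      have e2 : (a :: (Q₁ ++ [y])).getLast? = some y := by
        rw [show a :: (Q₁ ++ [y]) = (a :: Q₁) ++ [y] from by simp, List.getLast?_concat]
      have e4 : (y :: (Q₂ ++ [b])).getLast? = some b := by
        rw [show y :: (Q₂ ++ [b]) = (y :: Q₂) ++ [b] from by simp, List.getLast?_concat]
      have I1 := ih1 a y rfl e2
      have I2 := ih2 y b rfl e4
      have d0 : ((a :: (Q₁ ++ y :: Q₂ ++ [b])).drop 1).dropLast = Q₁ ++ y :: Q₂ := by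
        rw [List.drop_one, List.tail_cons,
          show Q₁ ++ y :: Q₂ ++ [b] = (Q₁ ++ y :: Q₂) ++ [b] from by simp,
          List.dropLast_concat]
      have d1 : ((a :: (Q₁ ++ [y])).drop 1).dropLast = Q₁ := by
        rw [List.drop_one, List.tail_cons, List.dropLast_concat]
      have d2 : ((y :: (Q₂ ++ [b])).drop 1).dropLast = Q₂ := by
        rw [List.drop_one, List.tail_cons, List.dropLast_concat]
      have key : lamWalk β (a :: (Q₁ ++ y :: Q₂ ++ [b]))
          = lamWalk β (a :: (Q₁ ++ [y])) + lamWalk β (y :: (Q₂ ++ [b])) - 2 * ((β y : ℤ) - 1) := by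
        simp only [lamWalk, d0, d1, d2, List.map_append, List.map_cons, List.sum_append,
          List.sum_cons, List.length_cons, List.length_append, List.length_nil]
        push_cast
        ring
      rw [key]
      have hpar : Even (lamWalk β (a :: (Q₁ ++ [y])) + lamWalk β (y :: (Q₂ ++ [b])) - 2 * ((β y : ℤ) - 1))
          ↔ (Even (lamWalk β (a :: (Q₁ ++ [y]))) ↔ Even (lamWalk β (y :: (Q₂ ++ [b])))) := by
        rcases Int.even_or_odd (lamWalk β (a :: (Q₁ ++ [y]))) with h | h <;>
        rcases Int.even_or_odd (lamWalk β (y :: (Q₂ ++ [b]))) with h' | h' <;>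
          simp only [Int.even_iff, Int.odd_iff] at h h' ⊢ <;>
        constructor <;> intro hh <;> first | omega | (exfalso; omega) | tauto
      rw [hpar, I1, I2]
      cases c a <;> cases c y <;> cases c b <;> simp

/-- Let `n ≥ 5` be odd, `G` connected bipartite, properly 2-coloured by `c`
(say `true` = black, `false` = white), with `δ(u,v) ≥ β(v) − 1` for all `u ≺ v`.  If every
black vertex `u` satisfies `γ'(u) ≤ (n−3)/2` then every white vertex `v` satisfies
`γ'(v) ≤ (n−1)/2`  (stated via `2γ'` as `n` is odd). -/
theorem gamma'_bound_white {m n : ℕ} (hn : 5 ≤ n) (hodd : Odd n)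
    (β : Fin m → ℕ) (hβ : ∀ v, β v = 1 ∨ β v = 2) (G : SimpleGraph (Fin m))
    (hconn : G.Connected)
    (c : Fin m → Bool) (hc : ∀ u v, G.Adj u v → c u ≠ c v)
    (hmin : ∀ u v : Fin m, u < v → ∀ d : ℤ, IsDelta G β u v d → (β v : ℤ) - 1 ≤ d)
    (g : Fin m → ℤ) (hg : IsGamma' G β g)
    (hblack : ∀ u, c u = true → 2 * g u ≤ (n : ℤ) - 3) :
    ∀ v, c v = false → 2 * g v ≤ (n : ℤ) - 1 := by
  have hn' : (5:ℤ) ≤ (n:ℤ) := by exact_mod_cast hn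
  have main : ∀ k : ℕ, ∀ v : Fin m, (v : ℕ) = k → c v = false → 2 * g v ≤ (n : ℤ) - 1 := by
    intro k
    induction k using Nat.strong_induction_on with
    | _ k IH =>
      intro v hk hv
      obtain ⟨t, ⟨ht0, hmaxle, hcases⟩, hgv⟩ := hg v
      have hβv : (β v : ℤ) ≤ 2 := by rcases hβ v with h | h <;> simp [h]
      rcases hcases with ht0' | ⟨u, huv, d, hd, ht⟩
      · rw [hgv, ht0']; linarith
      · have hd_lb : (β v : ℤ) - 1 ≤ d := hmin u v huv d hd
        cases hu : c u with
        | true =>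
            have hgu := hblack u hu
            rw [hgv, ht]; linarith
        | false =>
            have hku : (u : ℕ) < k := by
              rw [← hk]; exact huv
            have hgu : 2 * g u ≤ (n : ℤ) - 1 := IH (u : ℕ) hku u rfl hu
            have hdeven : Even d := by
              obtain ⟨⟨Q, ⟨hQ, hends⟩, hlam⟩, -⟩ := hd
              rw [← hlam]
              rcases hends with ⟨hh, hl⟩ | ⟨hh, hl⟩
              · exact (looping_parity β hc hQ u v hh hl).mpr (by rw [hu, hv])
              · exact (looping_parity β hc hQ v u hh hl).mpr (by rw [hu, hv])
            rcases hβ v with h | h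
            · rw [hgv, ht, h]
              push_cast
              linarith [hd_lb]
            · have hd2 : 2 ≤ d := by
                obtain ⟨e, he⟩ := hdeven
                rw [h] at hd_lb
                push_cast at hd_lb
                omega
              rw [hgv, ht, h]
              push_cast
              linarith
  intro v hv
  exact main (v : ℕ) v rfl hv

end CountingCSP
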